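/- arXiv:1710.04870 — 2 statements merged into one kernel-verified Lean document; each statement's English description precedes it below -/
import Mathlib

section
/- Let k ∈ ℕ with k ≥ 2 and let t > 0. Then for every r > 0, the derivative with respect to r of the function r ↦ r^{2k−1}·F_k(r,0,t) equals (t²/2)·r·(r^{2k−3}·F_{k−1}(r,0,t)); equivalently, (1/r)·(d/dr)[r^{2k−1} F_k(r,0,t)] = (t²/2)·r^{2k−3} F_{k−1}(r,0,t). -/
/-!
With `g x = cos (t √x)` one has `F_k(r,0,t) = (-1)^k g⁽ᵏ⁾(r²)`. On `x > 0`, `g` solves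
`x g'' + g'/2 + (t²/4) g = 0`, and differentiating `n` times gives
`x g⁽ⁿ⁺²⁾ + (n + 1/2) g⁽ⁿ⁺¹⁾ + (t²/4) g⁽ⁿ⁾ = 0`. The product rule gives
`d/dr [r^(2k-1) g⁽ᵏ⁾(r²)] = 2 r^(2k-2) (r² g⁽ᵏ⁺¹⁾ + (k - 1/2) g⁽ᵏ⁾)(r²)`, which the equation with
`n = k - 1` identifies with `-(t²/2) r^(2k-2) g⁽ᵏ⁻¹⁾(r²)`.
-/

open Real Set Topology
open scoped ContDiff

theorem ContDiffOn.hasDerivAt_iteratedDeriv {𝕜 F : Type*} [NontriviallyNormedField 𝕜]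
    [NormedAddCommGroup F] [NormedSpace 𝕜 F] {f : 𝕜 → F} {s : Set 𝕜} {x : 𝕜}
    (hf : ContDiffOn 𝕜 ∞ f s) (hs : IsOpen s) (hx : x ∈ s) (k : ℕ) :
    HasDerivAt (iteratedDeriv k f) (iteratedDeriv (k + 1) f x) x := by
  have hEq : iteratedDerivWithin k f s =ᶠ[𝓝 x] iteratedDeriv k f := by
    filter_upwards [hs.mem_nhds hx] with y hy
    exact iteratedDerivWithin_of_isOpen hs hy
  have hdiff : DifferentiableAt 𝕜 (iteratedDeriv k f) x :=
    ((hf.differentiableOn_iteratedDerivWithin (by exact_mod_cast WithTop.coe_lt_top _)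
      hs.uniqueDiffOn x hx).differentiableAt (hs.mem_nhds hx)).congr_of_eventuallyEq hEq.symm
  rw [iteratedDeriv_succ]
  exact hdiff.hasDerivAt

noncomputable def cosSqrt (t x : ℝ) : ℝ := cos (t * √x)

lemma contDiffOn_cosSqrt (t : ℝ) : ContDiffOn ℝ ∞ (cosSqrt t) (Ioi 0) := fun _ hx =>
  (contDiff_cos.contDiffAt.comp _
    (contDiffAt_const.mul (contDiffAt_sqrt (ne_of_gt hx)))).contDiffWithinAt

lemma hasDerivAt_cosSqrt (t : ℝ) {x : ℝ} (hx : 0 < x) :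
    HasDerivAt (cosSqrt t) (-(t * sin (t * √x)) / (2 * √x)) x := by
  refine ((hasDerivAt_sqrt hx.ne').const_mul t).cos.congr_deriv ?_
  field_simp

lemma hasDerivAt_deriv_cosSqrt (t : ℝ) {x : ℝ} (hx : 0 < x) :
    HasDerivAt (deriv (cosSqrt t))
      ((t * sin (t * √x) - t ^ 2 * √x * cos (t * √x)) / (4 * √x ^ 3)) x := by
  have hsqrt := hasDerivAt_sqrt hx.ne'
  have hsx : 0 < √x := sqrt_pos.mpr hx
  have hEq : (fun y => -(t * sin (t * √y)) / (2 * √y)) =ᶠ[𝓝 x] deriv (cosSqrt t) := by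
    filter_upwards [isOpen_Ioi.mem_nhds hx] with y hy
    exact (hasDerivAt_cosSqrt t hy).deriv.symm
  refine HasDerivAt.congr_of_eventuallyEq ?_ hEq.symm
  refine (((hsqrt.const_mul t).sin.const_mul t).neg.div (hsqrt.const_mul 2)
    (by positivity)).congr_deriv ?_
  simp only [Pi.neg_apply]
  field_simp
  ring

lemma cosSqrt_ode (t : ℝ) {x : ℝ} (hx : 0 < x) :
    x * iteratedDeriv 2 (cosSqrt t) x + 1 / 2 * iteratedDeriv 1 (cosSqrt t) x
      + t ^ 2 / 4 * iteratedDeriv 0 (cosSqrt t) x = 0 := by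
  rw [iteratedDeriv_succ, iteratedDeriv_one, iteratedDeriv_zero,
    (hasDerivAt_deriv_cosSqrt t hx).deriv, (hasDerivAt_cosSqrt t hx).deriv, cosSqrt]
  have hsx : 0 < √x := sqrt_pos.mpr hx
  nth_rewrite 1 [← sq_sqrt hx.le]
  field_simp
  ring

lemma ContDiffOn.iteratedDeriv_ode_succ {f : ℝ → ℝ} {s : Set ℝ} (hf : ContDiffOn ℝ ∞ f s)
    (hs : IsOpen s) {k : ℕ} {a b : ℝ}
    (hode : ∀ y ∈ s, y * iteratedDeriv (k + 2) f y + a * iteratedDeriv (k + 1) f y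
      + b * iteratedDeriv k f y = 0) {x : ℝ} (hx : x ∈ s) :
    x * iteratedDeriv (k + 3) f x + (a + 1) * iteratedDeriv (k + 2) f x
      + b * iteratedDeriv (k + 1) f x = 0 := by
  have hderiv := (((hasDerivAt_id x).mul (hf.hasDerivAt_iteratedDeriv hs hx (k + 2))).add
    ((hf.hasDerivAt_iteratedDeriv hs hx (k + 1)).const_mul a)).add
    ((hf.hasDerivAt_iteratedDeriv hs hx k).const_mul b)
  have hzero : HasDerivAt (fun y => y * iteratedDeriv (k + 2) f y
      + a * iteratedDeriv (k + 1) f y + b * iteratedDeriv k f y) 0 x := by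
    refine (hasDerivAt_const x (0 : ℝ)).congr_of_eventuallyEq ?_
    filter_upwards [hs.mem_nhds hx] with y hy
    exact hode y hy
  have := hderiv.unique hzero
  simp only [id, one_mul] at this
  linear_combination this

lemma iteratedDeriv_cosSqrt_ode (t : ℝ) (k : ℕ) {x : ℝ} (hx : 0 < x) :
    x * iteratedDeriv (k + 2) (cosSqrt t) x + (k + 1 / 2) * iteratedDeriv (k + 1) (cosSqrt t) x
      + t ^ 2 / 4 * iteratedDeriv k (cosSqrt t) x = 0 := by
  induction k generalizing x with
  | zero => simpa using cosSqrt_ode t hx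
  | succ k ih =>
    push_cast
    rw [add_right_comm (k : ℝ)]
    exact (contDiffOn_cosSqrt t).iteratedDeriv_ode_succ isOpen_Ioi (fun y hy => ih hy) hx

lemma iteratedDeriv_cos_mul_sqrt_sub (t x : ℝ) (n : ℕ) :
    iteratedDeriv n (fun c => cos (t * √(x - c))) 0 = (-1) ^ n * iteratedDeriv n (cosSqrt t) x := by
  rw [show (fun c => cos (t * √(x - c))) = fun c => cosSqrt t (x - c) from rfl,
    iteratedDeriv_comp_const_sub]
  simp

theorem stmt_10_general (k : ℕ) (hk : 2 ≤ k) (t : ℝ) (r : ℝ) (hr : 0 < r) :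
    HasDerivAt
      (fun r' : ℝ =>
        r' ^ (2 * k - 1) *
          iteratedDeriv k (fun c : ℝ => Real.cos (t * Real.sqrt (r' ^ 2 - c))) 0)
      ((t ^ 2 / 2) * r *
        (r ^ (2 * k - 3) *
          iteratedDeriv (k - 1) (fun c : ℝ => Real.cos (t * Real.sqrt (r ^ 2 - c))) 0))
      r := by
  obtain ⟨m, rfl⟩ : ∃ m, k = m + 2 := ⟨k - 2, by omega⟩
  rw [show 2 * (m + 2) - 1 = 2 * m + 3 by omega, show 2 * (m + 2) - 3 = 2 * m + 1 by omega,
    show m + 2 - 1 = m + 1 by omega]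
  simp only [iteratedDeriv_cos_mul_sqrt_sub]
  have hr2 : r ^ 2 ∈ Ioi (0 : ℝ) := pow_pos hr 2
  have hderiv := (hasDerivAt_pow (2 * m + 3) r).mul
    ((((contDiffOn_cosSqrt t).hasDerivAt_iteratedDeriv isOpen_Ioi hr2 (m + 2)).comp
      (h := fun x => x ^ 2) r (hasDerivAt_pow 2 r)).const_mul ((-1 : ℝ) ^ (m + 2)))
  refine hderiv.congr_deriv ?_
  have hode := iteratedDeriv_cosSqrt_ode t (m + 1) hr2
  rw [show m + 1 + 2 = m + 2 + 1 by ring, show m + 1 + 1 = m + 2 by ring] at hode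
  rw [show 2 * m + 3 - 1 = 2 * m + 2 by omega, Function.comp_apply]
  push_cast at hode ⊢
  linear_combination 2 * (-1 : ℝ) ^ m * r ^ (2 * m + 2) * hode

/-- For `k ≥ 2` and `r > 0`, the derivative in `r` of `r ↦ r^{2k−1}·F_k(r,0,t)`
equals `(t²/2)·r·(r^{2k−3}·F_{k−1}(r,0,t))`, where `F_k(r,0,t)` is the `k`-th
derivative at `c = 0` of `c ↦ cos(t·√(r²−c))`. -/
theorem stmt_10 (k : ℕ) (hk : 2 ≤ k) (t : ℝ) (ht : 0 < t) (r : ℝ) (hr : 0 < r) :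
    HasDerivAt
      (fun r' : ℝ =>
        r' ^ (2 * k - 1) *
          iteratedDeriv k (fun c : ℝ => Real.cos (t * Real.sqrt (r' ^ 2 - c))) 0)
      ((t ^ 2 / 2) * r *
        (r ^ (2 * k - 3) *
          iteratedDeriv (k - 1) (fun c : ℝ => Real.cos (t * Real.sqrt (r ^ 2 - c))) 0))
      r :=
  stmt_10_general k hk t r hr
end

section
/- For every m ∈ ℕ, every r ≥ 0 and every t > 0, Σ_{k=0}^{m} (1/k!) ∂_a^k g(r,0,t) = Σ_{j=0}^{m} Σ_{k=0}^{m−j} (1/(j!·k!)) · (d^k/ds^k [φ₁(s)^j])|_{s=0} · (−tr²)^j · r^{2(j+k)} · e^{−tr²}. -/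
/-!
With `s = r²` the map `a ↦ g(r,a,t)` is `a ↦ G(s a)`, so its `k`-th derivative at `0` is
`s^k G⁽ᵏ⁾(0)`. Since `2 / (1 + √(1 - 4u)) = 1 + u φ₁(u)` for `u ≤ 1/4`, near `0` we have
`G = e^{-ts} · exp ∘ w` with `w(u) = -ts · u φ₁(u)`. As `w(0) = 0`, the functions `exp ∘ w` and
`∑_{j ≤ k} w^j / j!` have the same derivatives of order `≤ k` at `0`, and by Leibniz the `k`-th
derivative of `u^j φ₁(u)^j` at `0` is `k!/(k-j)! · (φ₁^j)⁽ᵏ⁻ʲ⁾(0)`. Summing over `k ≤ m` and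
reindexing the triangle `j ≤ k ≤ m` by `k = j + i` gives the identity.
-/

open Finset Topology

theorem iteratedDeriv_comp_mul_left {𝕜 : Type*} [NontriviallyNormedField 𝕜]
    (n : ℕ) (f : 𝕜 → 𝕜) (c x : 𝕜) :
    iteratedDeriv n (fun y => f (c * y)) x = c ^ n * iteratedDeriv n f (c * x) := by
  induction n generalizing f with
  | zero => simp
  | succ n ih =>
    have hderiv : deriv (fun y => f (c * y)) = fun y => c * deriv f (c * y) :=
      funext fun y => deriv_comp_mul_left c f y
    rw [iteratedDeriv_succ', hderiv, iteratedDeriv_const_mul_field, ih, iteratedDeriv_succ',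
      pow_succ', mul_assoc]

theorem iteratedDeriv_pow_mul_zero {𝕜 : Type*} [NontriviallyNormedField 𝕜] {ψ : 𝕜 → 𝕜}
    {n j : ℕ} (hψ : ContDiffAt 𝕜 n ψ 0) (hj : j ≤ n) :
    iteratedDeriv n (fun x => x ^ j * ψ x) 0 = n.descFactorial j * iteratedDeriv (n - j) ψ 0 := by
  rw [iteratedDeriv_fun_mul (by fun_prop) hψ, sum_eq_single_of_mem j (by simpa [Nat.lt_succ_iff])]
  · rw [iteratedDeriv_fun_pow_zero, if_pos rfl, Nat.descFactorial_eq_factorial_mul_choose]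
    push_cast
    ring
  · intro i _ hij
    rw [iteratedDeriv_fun_pow_zero, if_neg hij, Nat.cast_zero, mul_zero, zero_mul]

noncomputable def expTail (m : ℕ) (y : ℝ) : ℝ :=
  Real.exp y - ∑ j ∈ range (m + 1), y ^ j / j.factorial

theorem expTail_zero_right (m : ℕ) : expTail m 0 = 0 := by
  simp [expTail, sum_range_succ']

theorem analyticAt_expTail (m : ℕ) (y : ℝ) : AnalyticAt ℝ (expTail m) y := by
  unfold expTail; fun_prop

theorem hasDerivAt_expTail_succ (m : ℕ) (y : ℝ) :
    HasDerivAt (expTail (m + 1)) (expTail m y) y := by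
  have hsum : HasDerivAt (fun y : ℝ => ∑ j ∈ range (m + 2), y ^ j / j.factorial)
      (∑ j ∈ range (m + 2), (j * y ^ (j - 1)) / j.factorial) y :=
    HasDerivAt.fun_sum fun j _ => ((hasDerivAt_pow j y).div_const _)
  refine ((Real.hasDerivAt_exp y).fun_sub hsum).congr_deriv ?_
  rw [expTail, sum_range_succ' _ (m + 1)]
  simp only [CharP.cast_eq_zero, zero_mul, zero_div, add_zero]
  congr 1
  refine sum_congr rfl fun j _ => ?_
  rw [Nat.factorial_succ]
  push_cast
  field_simp

/- The factor `g` makes the induction close: the derivative of `g · expTail (m + 1) ∘ u` is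
`g' · expTail (m + 1) ∘ u + g u' · expTail m ∘ u`. -/
theorem iteratedDeriv_mul_expTail_comp_eq_zero {u g : ℝ → ℝ} {x₀ : ℝ} (hu : AnalyticAt ℝ u x₀)
    (hu₀ : u x₀ = 0) {k m : ℕ} (hkm : k ≤ m) (hg : AnalyticAt ℝ g x₀) :
    iteratedDeriv k (fun x => g x * expTail m (u x)) x₀ = 0 := by
  induction k generalizing m g with
  | zero => simp [hu₀, expTail_zero_right]
  | succ k ih =>
    obtain ⟨m, rfl⟩ : ∃ m', m = m' + 1 := ⟨m - 1, by omega⟩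
    have hderiv : deriv (fun x => g x * expTail (m + 1) (u x)) =ᶠ[𝓝 x₀]
        fun x => deriv g x * expTail (m + 1) (u x) + (g x * deriv u x) * expTail m (u x) := by
      filter_upwards [hu.eventually_analyticAt, hg.eventually_analyticAt] with x hux hgx
      have := hgx.differentiableAt.hasDerivAt.fun_mul
        ((hasDerivAt_expTail_succ m (u x)).comp x hux.differentiableAt.hasDerivAt)
      exact this.deriv.trans (by simp only [Function.comp_apply]; ring)
    have hcomp (h : ℝ → ℝ) (n : ℕ) (hh : AnalyticAt ℝ h x₀) :
        ContDiffAt ℝ k (fun x => h x * expTail n (u x)) x₀ :=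
      (hh.fun_mul ((analyticAt_expTail n _).comp hu)).contDiffAt
    rw [iteratedDeriv_succ', hderiv.iteratedDeriv_eq,
      iteratedDeriv_fun_add (hcomp _ _ hg.deriv) (hcomp _ _ (hg.fun_mul hu.deriv)),
      ih (by omega) hg.deriv, ih (by omega) (hg.fun_mul hu.deriv), add_zero]

theorem iteratedDeriv_exp_comp_eq_sum {u : ℝ → ℝ} {x₀ : ℝ} (hu : AnalyticAt ℝ u x₀)
    (hu₀ : u x₀ = 0) {k m : ℕ} (hkm : k ≤ m) :
    iteratedDeriv k (fun x => Real.exp (u x)) x₀ =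
      ∑ j ∈ range (m + 1), iteratedDeriv k (fun x => u x ^ j) x₀ / j.factorial := by
  have hsplit : (fun x => Real.exp (u x)) =
      fun x => 1 * expTail m (u x) + ∑ j ∈ range (m + 1), u x ^ j / j.factorial := by
    funext x
    simp [expTail]
  have htail : AnalyticAt ℝ (fun x => 1 * expTail m (u x)) x₀ :=
    analyticAt_const.fun_mul ((analyticAt_expTail m _).comp hu)
  have hpow (j : ℕ) : AnalyticAt ℝ (fun x => u x ^ j / j.factorial) x₀ := by fun_prop
  rw [hsplit, iteratedDeriv_fun_add htail.contDiffAt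
      (Finset.analyticAt_fun_sum _ fun j _ => hpow j).contDiffAt,
    iteratedDeriv_mul_expTail_comp_eq_zero hu hu₀ hkm analyticAt_const, zero_add,
    iteratedDeriv_fun_sum fun j _ => (hpow j).contDiffAt]
  simp only [iteratedDeriv_div_const]

noncomputable def φ₁ (s : ℝ) : ℝ := ((1 / 2 + Real.sqrt (1 / 4 - s)) ^ 2)⁻¹

theorem analyticAt_φ₁ {s : ℝ} (hs : s < 1 / 4) : AnalyticAt ℝ φ₁ s := by
  have hsqrt : AnalyticAt ℝ (fun s => Real.sqrt (1 / 4 - s)) s :=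
    (Real.contDiffAt_sqrt (by linarith)).analyticAt.comp (by fun_prop)
  have hpos : (1 / 2 + Real.sqrt (1 / 4 - s)) ^ 2 ≠ 0 := by positivity
  exact ((analyticAt_const.add hsqrt).pow 2).inv hpos

theorem two_div_one_add_sqrt_eq {u : ℝ} (hu : u ≤ 1 / 4) :
    2 / (1 + Real.sqrt (1 - 4 * u)) = 1 + u * φ₁ u := by
  set q := Real.sqrt (1 / 4 - u) with hq
  have hq₀ : 0 ≤ q := Real.sqrt_nonneg _
  have hq2 : q ^ 2 = 1 / 4 - u := Real.sq_sqrt (by linarith)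
  have hsqrt : Real.sqrt (1 - 4 * u) = 2 * q := by
    rw [show 1 - 4 * u = 2 ^ 2 * (1 / 4 - u) by ring, Real.sqrt_mul (by norm_num),
      Real.sqrt_sq (by norm_num)]
  rw [hsqrt, φ₁, ← hq]
  field_simp
  linear_combination (-4) * hq2

theorem iteratedDeriv_mul_φ₁_pow_zero (c : ℝ) {j k : ℕ} (hjk : j ≤ k) :
    iteratedDeriv k (fun u => (c * (u * φ₁ u)) ^ j) 0 =
      c ^ j * k.descFactorial j * iteratedDeriv (k - j) (fun s => φ₁ s ^ j) 0 := by
  have hφ : ContDiffAt ℝ k (fun s => φ₁ s ^ j) 0 :=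
    ((analyticAt_φ₁ (by norm_num)).pow j).contDiffAt
  simp only [mul_pow]
  rw [iteratedDeriv_const_mul_field, iteratedDeriv_pow_mul_zero hφ hjk, mul_assoc]

theorem taylorCoeff_exp_div_one_add_sqrt_eq_sum (r t : ℝ) (k : ℕ) :
    (1 / k.factorial : ℝ) * iteratedDeriv k
        (fun a : ℝ => Real.exp (-(2 * t * r ^ 2) / (1 + Real.sqrt (1 - 4 * a * r ^ 2)))) 0 =
      ∑ j ∈ range (k + 1), (1 / ((j.factorial : ℝ) * (k - j).factorial)) *
        iteratedDeriv (k - j) (fun s => φ₁ s ^ j) 0 * (-(t * r ^ 2)) ^ j *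
          r ^ (2 * (j + (k - j))) * Real.exp (-t * r ^ 2) := by
  set G : ℝ → ℝ := fun u => Real.exp (-(2 * t * r ^ 2) / (1 + Real.sqrt (1 - 4 * u)))
  have hscale : (fun a : ℝ => Real.exp (-(2 * t * r ^ 2) / (1 + Real.sqrt (1 - 4 * a * r ^ 2)))) =
      fun a => G (r ^ 2 * a) := by
    funext a
    simp only [G]
    ring_nf
  have hsplit : G =ᶠ[𝓝 0]
      fun u => Real.exp (-(t * r ^ 2)) * Real.exp (-(t * r ^ 2) * (u * φ₁ u)) := by
    filter_upwards [Iic_mem_nhds (by norm_num : (0 : ℝ) < 1 / 4)] with u hu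
    rw [← Real.exp_add, ← mul_one_add, ← two_div_one_add_sqrt_eq hu]
    simp only [G]
    ring_nf
  have hw : AnalyticAt ℝ (fun u => -(t * r ^ 2) * (u * φ₁ u)) 0 :=
    analyticAt_const.mul (analyticAt_id.mul (analyticAt_φ₁ (by norm_num)))
  rw [hscale, iteratedDeriv_comp_mul_left k G, mul_zero, hsplit.iteratedDeriv_eq,
    iteratedDeriv_const_mul_field, iteratedDeriv_exp_comp_eq_sum hw (by simp) le_rfl,
    mul_sum, mul_sum, mul_sum]
  refine sum_congr rfl fun j hj => ?_
  have hjk : j ≤ k := Nat.lt_succ_iff.mp (mem_range.mp hj)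
  have hfact : ((k - j).factorial : ℝ) * k.descFactorial j = k.factorial := by
    exact_mod_cast Nat.factorial_mul_descFactorial hjk
  have hdesc : (k.descFactorial j : ℝ) ≠ 0 := by
    exact_mod_cast (Nat.descFactorial_pos.mpr hjk).ne'
  rw [iteratedDeriv_mul_φ₁_pow_zero _ hjk, Nat.add_sub_cancel' hjk, pow_mul, neg_mul, ← hfact]
  field_simp

theorem stmt_16_general (m : ℕ) (r : ℝ) (t : ℝ) :
    ∑ k ∈ Finset.range (m + 1), (1 / (Nat.factorial k) : ℝ) *
        iteratedDeriv k
          (fun a : ℝ => Real.exp (-(2 * t * r ^ 2) / (1 + Real.sqrt (1 - 4 * a * r ^ 2)))) 0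
    = ∑ j ∈ Finset.range (m + 1), ∑ k ∈ Finset.range (m - j + 1),
        (1 / ((Nat.factorial j : ℝ) * (Nat.factorial k)) : ℝ) *
          iteratedDeriv k (fun s : ℝ => (((1/2 + Real.sqrt (1/4 - s)) ^ 2)⁻¹) ^ j) 0 *
          (-(t * r ^ 2)) ^ j * r ^ (2 * (j + k)) * Real.exp (-t * r ^ 2) := by
  simp only [taylorCoeff_exp_div_one_add_sqrt_eq_sum]
  refine (sum_range_diag_flip (m + 1) fun j i => (1 / ((j.factorial : ℝ) * i.factorial)) *
    iteratedDeriv i (fun s => φ₁ s ^ j) 0 * (-(t * r ^ 2)) ^ j * r ^ (2 * (j + i)) *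
      Real.exp (-t * r ^ 2)).trans (sum_congr rfl fun j hj => ?_)
  rw [show m + 1 - j = m - j + 1 by have := mem_range.mp hj; omega]
  rfl

/-- Equivalence of the author's expansion of the diffusive part `D¹` with the
Takeda expansion: for every `m ≥ 1`, `r ≥ 0`, `t > 0`,
`Σ_{k=0}^m (1/k!) ∂_a^k g(r,0,t)
  = Σ_{j=0}^m Σ_{k=0}^{m−j} (1/(j!k!)) (d^k/ds^k φ₁(s)^j)|₀ (−tr²)^j r^{2(j+k)} e^{−tr²}`,
where `g(r,a,t) = exp(−2tr²/(1+√(1−4ar²)))` and `φ₁(s) = (1/2+√(1/4−s))^{−2}`. -/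
theorem stmt_16 (m : ℕ) (hm : 1 ≤ m) (r : ℝ) (hr : 0 ≤ r) (t : ℝ) (ht : 0 < t) :
    ∑ k ∈ Finset.range (m + 1), (1 / (Nat.factorial k) : ℝ) *
        iteratedDeriv k
          (fun a : ℝ => Real.exp (-(2 * t * r ^ 2) / (1 + Real.sqrt (1 - 4 * a * r ^ 2)))) 0
    = ∑ j ∈ Finset.range (m + 1), ∑ k ∈ Finset.range (m - j + 1),
        (1 / ((Nat.factorial j : ℝ) * (Nat.factorial k)) : ℝ) *
          iteratedDeriv k (fun s : ℝ => (((1/2 + Real.sqrt (1/4 - s)) ^ 2)⁻¹) ^ j) 0 *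
          (-(t * r ^ 2)) ^ j * r ^ (2 * (j + k)) * Real.exp (-t * r ^ 2) :=
  stmt_16_general m r t
end
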